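/- Let Φ be the character on the double tensor Hopf algebra extending the state φ of a non-commutative probability space (A, φ), and let β be the unique infinitesimal character with Φ = ε + Φ ≻ β. Then for any word w = a_1⋯a_n, Φ(w) = Σ_{I ∈ B_n} Π_{blocks J of I} β(a_J), the sum over interval partitions of [n]; i.e., the β(a_1⋯a_n) are the multivariate boolean cumulants, satisfying the recursion Φ(a_1⋯a_n) = Σ_{j=1}^{n} β(a_1⋯a_j) Φ(a_{j+1}⋯a_n). -/

import Mathlib

open scoped TensorProduct Classical

/-- Nonempty words with letters in `A`: a basis of the tensor algebra `T(A)`. -/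
def Wrd (A : Type*) := {l : List A // l ≠ []}

/-- The double tensor algebra `H = T̄(T(A))`: the free (monoid) algebra on bar-sequences
`w₁|⋯|w_m` of nonempty words `wᵢ ∈ T(A)`, with the concatenation (bar) product. -/
abbrev DT (k A : Type*) [CommRing k] := MonoidAlgebra k (FreeMonoid (Wrd A))

variable (k A : Type*) [Field k] [Ring A] [Algebra k A]

/-- The word `a₁⋯a_n` as an element of `H` (the empty word is the unit `1`). -/
noncomputable def wordEl (l : List A) : DT k A :=
  if h : l = [] then 1 else MonoidAlgebra.of k (FreeMonoid (Wrd A)) (FreeMonoid.of ⟨l, h⟩)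

/-- The bar element `w₁|⋯|w_m ∈ H` of a list of words. -/
noncomputable def barEl (ls : List (List A)) : DT k A := (ls.map (wordEl k A)).prod

/-- Decompose a (sorted) list of indices into its maximal runs of consecutive indices
(the connected components). -/
def runs {n : ℕ} : List (Fin n) → List (List (Fin n))
  | [] => []
  | [i] => [[i]]
  | i :: j :: rest =>
    match runs (j :: rest) with
    | [] => [[i]]
    | r :: rs => if (i : ℕ) + 1 = (j : ℕ) then (i :: r) :: rs else [i] :: r :: rs

/-- For a subset `S` of positions of `l`, the subword `a_S`. -/
noncomputable def subword (l : List A) (S : Finset (Fin l.length)) : DT k A :=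
  wordEl k A ((S.sort (· ≤ ·)).map l.get)

/-- For a subset `S` of positions of `l`, the bar element
`a_{J^S} = a_{J₁}|⋯|a_{J_m}` given by the connected components of the complement. -/
noncomputable def compBar (l : List A) (S : Finset (Fin l.length)) : DT k A :=
  barEl k A ((runs (Sᶜ.sort (· ≤ ·))).map fun r => r.map l.get)

/-- The coproduct on a word: `Δ(a₁⋯a_n) = Σ_{S ⊆ [n]} a_S ⊗ a_{J₁}|⋯|a_{J_m}`. -/
noncomputable def deltaWord (l : List A) : DT k A ⊗[k] DT k A :=
  ∑ S : Finset (Fin l.length), subword k A l S ⊗ₜ[k] compBar k A l S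

/-- The coproduct `Δ` of `H`, the multiplicative extension of `deltaWord`. -/
noncomputable def coprod : DT k A →ₐ[k] DT k A ⊗[k] DT k A :=
  MonoidAlgebra.lift k _ (FreeMonoid (Wrd A))
    (FreeMonoid.lift fun w : Wrd A => deltaWord k A w.1)

/-- The canonical counit `ε` of `H`, killing all nonempty bar-sequences. -/
noncomputable def counit : DT k A →ₐ[k] k :=
  MonoidAlgebra.lift k k (FreeMonoid (Wrd A)) (FreeMonoid.lift fun _ : Wrd A => (0 : k))

/-- `Δ⁺_≻` on a word: `Δ⁺_≻(a₁⋯a_n) = Σ_{1 ∉ S ⊂ [n]} a_S ⊗ a_{J^S_{[n]}}`. -/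
noncomputable def deltaSuccWord (l : List A) : DT k A ⊗[k] DT k A :=
  ∑ S : Finset (Fin l.length),
    if (¬ ∃ i ∈ S, (i : ℕ) = 0) ∧ S ≠ Finset.univ then
      subword k A l S ⊗ₜ[k] compBar k A l S else 0

/-- Extension of a function on the monomial basis of `H` to a linear map. -/
noncomputable def basisExt {M : Type*} [AddCommGroup M] [Module k M]
    (f : FreeMonoid (Wrd A) → M) : DT k A →ₗ[k] M :=
  (Finsupp.lsum k fun g => LinearMap.toSpanSingleton k M (f g)) ∘ₗ
    (MonoidAlgebra.coeffLinearEquiv k).toLinearMap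

/-- `Δ⁺_≻` on `H`, extended from words via `Δ⁺_≻(w·b) = Δ⁺_≻(w)·Δ(b)` (and `0` on the
unit). -/
noncomputable def dPlusSucc : DT k A →ₗ[k] DT k A ⊗[k] DT k A :=
  basisExt k A fun g =>
    match FreeMonoid.toList g with
    | [] => 0
    | w :: rest =>
        deltaSuccWord k A w.1 *
          coprod k A (MonoidAlgebra.of k (FreeMonoid (Wrd A)) (FreeMonoid.ofList rest))

/-- The right half-shuffle convolution `f ≻ g := m_k ∘ (f ⊗ g) ∘ Δ_≻` on linear forms
(with the unit conventions `ε ≻ f = f`, `f ≻ ε = 0` built into `Δ⁺_≻`). -/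
noncomputable def convSucc (f g : DT k A →ₗ[k] k) : DT k A →ₗ[k] k :=
  (LinearMap.mul' k k).comp ((TensorProduct.map f g).comp (dPlusSucc k A))

/-- The character `Φ` of `H` extending the state `φ` of the non-commutative
probability space `(A, φ)`. -/
noncomputable def extChar (φ : A →ₗ[k] k) : DT k A →ₐ[k] k :=
  MonoidAlgebra.lift k k (FreeMonoid (Wrd A))
    (FreeMonoid.lift fun w : Wrd A => φ w.1.prod)

/-!
Evaluate `Φ = ε + Φ ≻ β` on a word `a₁⋯aₙ`. In `Δ⁺_≻(a₁⋯aₙ)` the right factor `a_{J^S}` is a bar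
product of the maximal runs of `[n] ∖ S`, so `β` kills every term in which `[n] ∖ S` is not a
single run; as `1 ∉ S`, the surviving `S` are the tails `{j + 1, …, n}` with `1 ≤ j ≤ n`, which
gives the boolean recursion `Φ(a₁⋯aₙ) = Σⱼ β(a₁⋯aⱼ) Φ(aⱼ₊₁⋯aₙ)`. Splitting a chain of cut points
`0 = c₀ < c₁ < ⋯ < c_q = n` at its first step `c₁` shows that the sum over interval partitions
satisfies the same recursion, with the same value on the empty word.
-/

section Runs

variable {n : ℕ}

lemma exists_runs_cons (i : Fin n) (t : List (Fin n)) :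
    ∃ r rs, runs (i :: t) = (i :: r) :: rs := by
  match t with
  | [] => exact ⟨[], [], rfl⟩
  | j :: rest =>
    obtain ⟨r, rs, h⟩ := exists_runs_cons j rest
    by_cases hij : (i : ℕ) + 1 = j
    · exact ⟨j :: r, rs, by simp [runs, h, hij]⟩
    · exact ⟨[], (j :: r) :: rs, by simp [runs, h, hij]⟩

lemma runs_of_isChain {m : List (Fin n)} (hm : m ≠ [])
    (hc : m.IsChain fun a b : Fin n => (a : ℕ) + 1 = b) : runs m = [m] := by
  match m, hm, hc with
  | [_], _, _ => rfl
  | i :: j :: rest, _, hc =>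
    rw [List.isChain_cons_cons] at hc
    simp [runs, runs_of_isChain (List.cons_ne_nil j rest) hc.2, hc.1]

lemma exists_runs_eq_cons_cons {m : List (Fin n)}
    (hc : ¬ m.IsChain fun a b : Fin n => (a : ℕ) + 1 = b) :
    ∃ r₁ r₂ rs, r₁ ≠ [] ∧ r₂ ≠ [] ∧ runs m = r₁ :: r₂ :: rs := by
  match m, hc with
  | [], hc => exact absurd List.IsChain.nil hc
  | [i], hc => exact absurd (List.IsChain.singleton i) hc
  | i :: j :: rest, hc =>
    rw [List.isChain_cons_cons, not_and_or] at hc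
    by_cases hij : (i : ℕ) + 1 = j
    · obtain ⟨r₁, r₂, rs, -, h₂, h⟩ := exists_runs_eq_cons_cons (hc.resolve_left (not_not.2 hij))
      exact ⟨i :: r₁, r₂, rs, List.cons_ne_nil _ _, h₂, by simp [runs, h, hij]⟩
    · obtain ⟨r, rs, h⟩ := exists_runs_cons j rest
      exact ⟨[i], j :: r, rs, List.cons_ne_nil _ _, List.cons_ne_nil _ _, by simp [runs, h, hij]⟩

end Runs

lemma eq_range'_of_isChain_add_one :
    ∀ {a : ℕ} {l : List ℕ}, (a :: l).IsChain (fun x y => x + 1 = y) →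
      a :: l = List.range' a (l.length + 1)
  | _, [], _ => rfl
  | a, b :: l, hc => by
    rw [List.isChain_cons_cons] at hc
    rw [List.length_cons, List.range'_succ, hc.1, ← eq_range'_of_isChain_add_one hc.2]

section TailSet

variable {n : ℕ}

lemma isChain_finRange : (List.finRange n).IsChain fun a b : Fin n => (a : ℕ) + 1 = b := by
  rw [← List.isChain_map (R := fun x y : ℕ => x + 1 = y), List.map_coe_finRange_eq_range,
    List.isChain_range]
  exact fun _ _ => rfl

lemma sort_toFinset_of_sublist_finRange {l : List (Fin n)} (hl : l.Sublist (List.finRange n)) :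
    l.toFinset.sort (· ≤ ·) = l :=
  (List.toFinset_sort _ ((List.nodup_finRange n).sublist hl)).2
    (((List.pairwise_lt_finRange n).sublist hl).imp le_of_lt)

/-- Positions are 0-based: this is the tail `{j + 1, …, n}` of `[n]`. -/
def tailSet (n j : ℕ) : Finset (Fin n) := Finset.univ.filter fun i => j ≤ (i : ℕ)

lemma sort_tailSet (j : ℕ) : (tailSet n j).sort (· ≤ ·) = (List.finRange n).drop j := by
  convert sort_toFinset_of_sublist_finRange (List.drop_sublist j (List.finRange n))
  ext i
  simp only [tailSet, Finset.mem_filter, Finset.mem_univ, true_and, List.mem_toFinset,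
    List.mem_drop_iff_getElem, List.getElem_finRange, Fin.cast_mk, Fin.ext_iff,
    List.length_finRange, exists_prop]
  exact ⟨fun h => ⟨i - j, by omega, by omega⟩, fun ⟨_, _, hp⟩ => by omega⟩

lemma sort_compl_tailSet (j : ℕ) : (tailSet n j)ᶜ.sort (· ≤ ·) = (List.finRange n).take j := by
  convert sort_toFinset_of_sublist_finRange (List.take_sublist j (List.finRange n))
  ext i
  simp [tailSet, List.mem_take_iff_getElem, Fin.ext_iff]

lemma card_tailSet (j : ℕ) : (tailSet n j).card = n - j := by
  rw [← Finset.length_sort (· ≤ ·), sort_tailSet, List.length_drop, List.length_finRange]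

lemma tailSet_injOn : Set.InjOn (tailSet n) (Set.Iic n) := fun j hj j' hj' h => by
  have := congrArg Finset.card h
  rw [card_tailSet, card_tailSet] at this
  simp only [Set.mem_Iic] at hj hj'
  omega

lemma zero_notMem_tailSet_and_ne_univ {j : ℕ} (hj : j ∈ Finset.Icc 1 n) :
    (¬ ∃ i ∈ tailSet n j, (i : ℕ) = 0) ∧ tailSet n j ≠ Finset.univ := by
  rw [Finset.mem_Icc] at hj
  have h0 : ¬ ∃ i ∈ tailSet n j, (i : ℕ) = 0 := by
    rintro ⟨i, hi, hi0⟩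
    simp only [tailSet, Finset.mem_filter] at hi
    omega
  refine ⟨h0, fun h => h0 ⟨⟨0, by omega⟩, h ▸ Finset.mem_univ _, rfl⟩⟩

lemma eq_tailSet_of_isChain {S : Finset (Fin n)} (h0 : ¬ ∃ i ∈ S, (i : ℕ) = 0)
    (hS : S ≠ Finset.univ)
    (hc : (Sᶜ.sort (· ≤ ·)).IsChain fun a b : Fin n => (a : ℕ) + 1 = b) :
    ∃ j ∈ Finset.Icc 1 n, S = tailSet n j := by
  obtain ⟨i₀, -, hi₀⟩ := Finset.exists_mem_notMem_of_card_lt_card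
    (Finset.card_lt_card (Finset.ssubset_univ_iff.2 hS))
  have hz : (⟨0, i₀.pos⟩ : Fin n) ∈ Sᶜ.sort (· ≤ ·) := by
    simpa using fun h => h0 ⟨_, h, rfl⟩
  set m := Sᶜ.sort (· ≤ ·)
  -- a run of consecutive values through `0` is `0, 1, …, m.length - 1`
  have hm : m.map Fin.val = List.range m.length := by
    obtain ⟨a, t, hat⟩ := List.exists_cons_of_ne_nil (List.ne_nil_of_mem hz)
    have hrange := eq_range'_of_isChain_add_one (a := a) (l := t.map Fin.val)
      ((List.isChain_map (l := a :: t) (R := fun x y : ℕ => x + 1 = y) Fin.val).2 (hat ▸ hc))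
    have ha : (a : ℕ) = 0 := by
      have h0 : 0 ∈ (a : ℕ) :: t.map Fin.val := by
        simpa [hat] using List.mem_map_of_mem (f := Fin.val) hz
      rw [hrange, List.mem_range'_1] at h0
      omega
    simpa [hat, ha, List.range_eq_range'] using hrange
  have hmem : ∀ i : Fin n, i ∈ S ↔ m.length ≤ i := by
    intro i
    rw [← not_lt, ← List.mem_range, ← hm, List.mem_map_of_injective Fin.val_injective,
      Finset.mem_sort, Finset.mem_compl, not_not]
  refine ⟨m.length, Finset.mem_Icc.2 ⟨List.length_pos_of_mem hz, ?_⟩, ?_⟩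
  · simpa [m] using Finset.card_le_univ Sᶜ
  · ext i
    simp [tailSet, hmem]

end TailSet

section Words

omit [Ring A] [Algebra k A]

lemma counit_wordEl {l : List A} (hl : l ≠ []) : counit k A (wordEl k A l) = 0 := by
  rw [wordEl, dif_neg hl, counit, MonoidAlgebra.lift_of]
  exact FreeMonoid.lift_eval_of _ _

lemma subword_tailSet (l : List A) (j : ℕ) :
    subword k A l (tailSet l.length j) = wordEl k A (l.drop j) := by
  rw [subword, sort_tailSet, List.map_drop, List.map_get_finRange]

lemma compBar_tailSet (l : List A) {j : ℕ} (hj : j ∈ Finset.Icc 1 l.length) :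
    compBar k A l (tailSet l.length j) = wordEl k A (l.take j) := by
  rw [Finset.mem_Icc] at hj
  have hne : (List.finRange l.length).take j ≠ [] := by
    simp only [ne_eq, List.take_eq_nil_iff, List.finRange_eq_nil_iff]
    omega
  rw [compBar, sort_compl_tailSet, runs_of_isChain hne (isChain_finRange.take j)]
  simp [barEl, List.map_take, List.map_get_finRange]

lemma map_compBar_eq_zero_of_not_isChain (β : DT k A →ₗ[k] k)
    (hβ2 : ∀ x y : DT k A, counit k A x = 0 → counit k A y = 0 → β (x * y) = 0)
    (l : List A) {S : Finset (Fin l.length)}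
    (hc : ¬ (Sᶜ.sort (· ≤ ·)).IsChain fun a b : Fin l.length => (a : ℕ) + 1 = b) :
    β (compBar k A l S) = 0 := by
  obtain ⟨r₁, r₂, rs, h₁, h₂, h⟩ := exists_runs_eq_cons_cons hc
  rw [compBar, h]
  simp only [List.map_cons, barEl, List.prod_cons]
  refine hβ2 _ _ (counit_wordEl k A (by simpa using h₁)) ?_
  rw [map_mul, counit_wordEl k A (by simpa using h₂), zero_mul]

lemma dPlusSucc_wordEl {l : List A} (hl : l ≠ []) :
    dPlusSucc k A (wordEl k A l) = deltaSuccWord k A l := by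
  simp only [dPlusSucc, basisExt, wordEl, hl, ↓reduceDIte, MonoidAlgebra.of_apply,
    LinearMap.coe_comp, Finsupp.coe_lsum, LinearEquiv.coe_coe, Function.comp_apply,
    MonoidAlgebra.coeffLinearEquiv_apply, MonoidAlgebra.coeff_single,
    LinearMap.toSpanSingleton_apply, zero_smul, Finsupp.sum_single_index, one_smul]
  change deltaSuccWord k A l * coprod k A (MonoidAlgebra.single 1 1) = _
  rw [← MonoidAlgebra.one_def, map_one, mul_one]

lemma convSucc_wordEl (f β : DT k A →ₗ[k] k)
    (hβ2 : ∀ x y : DT k A, counit k A x = 0 → counit k A y = 0 → β (x * y) = 0)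
    {l : List A} (hl : l ≠ []) :
    convSucc k A f β (wordEl k A l) =
      ∑ j ∈ Finset.Icc 1 l.length, f (wordEl k A (l.drop j)) * β (wordEl k A (l.take j)) := by
  simp only [convSucc, LinearMap.comp_apply, dPlusSucc_wordEl k A hl, deltaSuccWord, map_sum,
    apply_ite, map_zero, TensorProduct.map_tmul, LinearMap.mul'_apply]
  rw [← Finset.sum_subset (Finset.subset_univ ((Finset.Icc 1 l.length).image (tailSet _))),
    Finset.sum_image (tailSet_injOn.mono fun j hj => (Finset.mem_Icc.1 hj).2)]
  · refine Finset.sum_congr rfl fun j hj => ?_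
    rw [if_pos (zero_notMem_tailSet_and_ne_univ hj), subword_tailSet, compBar_tailSet k A l hj]
  · intro S _ hS
    split_ifs with hP
    · by_cases hc : (Sᶜ.sort (· ≤ ·)).IsChain fun a b : Fin l.length => (a : ℕ) + 1 = b
      · obtain ⟨j, hj, rfl⟩ := eq_tailSet_of_isChain hP.1 hP.2 hc
        exact absurd (Finset.mem_image_of_mem _ hj) hS
      · rw [map_compBar_eq_zero_of_not_isChain k A β hβ2 l hc, mul_zero]
    · rfl

end Words

theorem extChar_wordEl_eq_sum (φ : A →ₗ[k] k) (β : DT k A →ₗ[k] k)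
    (hβ2 : ∀ x y : DT k A, counit k A x = 0 → counit k A y = 0 → β (x * y) = 0)
    (hβ : (extChar k A φ).toLinearMap =
      (counit k A).toLinearMap + convSucc k A (extChar k A φ).toLinearMap β)
    {l : List A} (hl : l ≠ []) :
    extChar k A φ (wordEl k A l) =
      ∑ j ∈ Finset.Icc 1 l.length,
        β (wordEl k A (l.take j)) * extChar k A φ (wordEl k A (l.drop j)) := by
  have h := LinearMap.congr_fun hβ (wordEl k A l)
  simp only [LinearMap.add_apply, AlgHom.toLinearMap_apply] at h
  rw [h, counit_wordEl k A hl, zero_add, convSucc_wordEl k A _ β hβ2 hl]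
  simp only [AlgHom.toLinearMap_apply, mul_comm]

lemma StrictMono.val_zero_add_le {q N : ℕ} {c : Fin (q + 1) → Fin N} (hc : StrictMono c)
    (i : Fin (q + 1)) : (c 0 : ℕ) + i ≤ c i := by
  induction i using Fin.induction with
  | zero => simp
  | succ i ih =>
    have := Fin.lt_def.1 (hc (Fin.castSucc_lt_succ (i := i)))
    simp only [Fin.val_castSucc, Fin.val_succ] at ih ⊢
    omega

section IntervalPartitions

variable {R : Type*} [CommSemiring R] (n : ℕ) (g : ℕ → ℕ → R)

def cutChainSum (q s : ℕ) : R :=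
  ∑ c : Fin (q + 1) → Fin (n + 1),
    if StrictMono c ∧ (c 0 : ℕ) = s ∧ (c (Fin.last q) : ℕ) = n then
      ∏ j : Fin q, g (c j.castSucc) (c j.succ) else 0

lemma cutChainSum_zero (s : ℕ) : cutChainSum n g 0 s = if s = n then 1 else 0 := by
  have hmono (x : Fin (n + 1)) : StrictMono ((Equiv.funUnique (Fin 1) _).symm x) :=
    Subsingleton.strictMono _
  rw [cutChainSum, ← (Equiv.funUnique (Fin 1) (Fin (n + 1))).symm.sum_comp]
  simp only [hmono, true_and, Fin.prod_univ_zero]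
  change ∑ x : Fin (n + 1), (if (x : ℕ) = s ∧ (x : ℕ) = n then (1 : R) else 0) = _
  split_ifs with h
  · subst h
    rw [Fintype.sum_eq_single (Fin.last s) fun x hx => if_neg fun h => hx (Fin.ext h.1)]
    simp
  · exact Finset.sum_eq_zero fun x _ => if_neg fun ⟨hs, hn⟩ => h (hs ▸ hn)

lemma cutChainSum_succ (q : ℕ) {s : ℕ} (hs : s ≤ n) :
    cutChainSum n g (q + 1) s = ∑ j ∈ Finset.Ioc s n, g s j * cutChainSum n g q j := by
  simp only [cutChainSum, Finset.mul_sum, mul_ite, mul_zero]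
  rw [← (Fin.consEquiv fun _ => Fin (n + 1)).sum_comp, Fintype.sum_prod_type, Finset.sum_comm,
    Finset.sum_comm (s := Finset.Ioc s n)]
  refine Finset.sum_congr rfl fun c _ => ?_
  rw [Fintype.sum_eq_single ⟨s, by omega⟩]
  · have hcons : StrictMono (Fin.cons ⟨s, Nat.lt_succ_of_le hs⟩ c : Fin (q + 2) → Fin (n + 1)) ↔
        s < c 0 ∧ StrictMono c := strictMono_vecCons
    simp only [Fin.consEquiv, Equiv.coe_fn_mk, Fin.cons_zero, Fin.cons_last, true_and,
      Fin.prod_univ_succ, Fin.castSucc_zero, Fin.cons_succ, ← Fin.succ_castSucc, hcons]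
    by_cases h : s < c 0 ∧ StrictMono c ∧ (c (Fin.last q) : ℕ) = n
    · rw [if_pos (and_assoc.2 h), Finset.sum_eq_single_of_mem (c 0 : ℕ)
        (Finset.mem_Ioc.2 ⟨h.1, Nat.lt_succ_iff.1 (c 0).isLt⟩)
        fun j _ hj => if_neg (by rintro ⟨-, h', -⟩; exact hj h'.symm), if_pos ⟨h.2.1, rfl, h.2.2⟩]
    · rw [if_neg (fun h' => h (and_assoc.1 h')), Finset.sum_eq_zero]
      intro j hj
      refine if_neg ?_
      rintro ⟨hc, rfl, hlast⟩
      exact h ⟨(Finset.mem_Ioc.1 hj).1, hc, hlast⟩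
  · intro x hx
    refine if_neg ?_
    rintro ⟨-, h0, -⟩
    exact hx (Fin.ext h0)

lemma cutChainSum_eq_zero_of_lt {q s : ℕ} (h : n < s + q) : cutChainSum n g q s = 0 := by
  refine Finset.sum_eq_zero fun c _ => if_neg ?_
  rintro ⟨hc, rfl, hlast⟩
  have := hc.val_zero_add_le (Fin.last q)
  simp only [Fin.val_last] at this
  omega

def intervalPartitionSum (s : ℕ) : R := ∑ q ∈ Finset.range (n + 1), cutChainSum n g q s

lemma intervalPartitionSum_eq {s : ℕ} (hs : s ≤ n) :
    intervalPartitionSum n g s =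
      (if s = n then 1 else 0) + ∑ j ∈ Finset.Ioc s n, g s j * intervalPartitionSum n g j := by
  have hlong (j : ℕ) (hj : j ∈ Finset.Ioc s n) :
      ∑ q ∈ Finset.range n, cutChainSum n g q j = intervalPartitionSum n g j := by
    rw [intervalPartitionSum, Finset.sum_range_succ,
      cutChainSum_eq_zero_of_lt n g (by rw [Finset.mem_Ioc] at hj; omega), add_zero]
  rw [intervalPartitionSum, Finset.sum_range_succ', cutChainSum_zero, add_comm]
  simp only [cutChainSum_succ n g _ hs]
  rw [Finset.sum_comm]
  congr 1
  refine Finset.sum_congr rfl fun j hj => ?_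
  rw [← Finset.mul_sum, hlong j hj]

lemma intervalPartitionSum_zero (hn : n ≠ 0) :
    intervalPartitionSum n g 0 = ∑ q ∈ Finset.Icc 1 n, cutChainSum n g q 0 := by
  rw [intervalPartitionSum, Finset.range_eq_Ico,
    Finset.sum_eq_sum_Ico_succ_bot (by omega : 0 < n + 1), cutChainSum_zero, if_neg (Ne.symm hn),
    zero_add, zero_add, Finset.Ico_add_one_right_eq_Icc]

end IntervalPartitions

theorem extChar_wordEl_drop_eq_intervalPartitionSum (φ : A →ₗ[k] k) (β : DT k A →ₗ[k] k)
    (hβ2 : ∀ x y : DT k A, counit k A x = 0 → counit k A y = 0 → β (x * y) = 0)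
    (hβ : (extChar k A φ).toLinearMap =
      (counit k A).toLinearMap + convSucc k A (extChar k A φ).toLinearMap β)
    (l : List A) {s : ℕ} (hs : s ≤ l.length) :
    extChar k A φ (wordEl k A (l.drop s)) =
      intervalPartitionSum l.length (fun a b => β (wordEl k A ((l.drop a).take (b - a)))) s := by
  rw [intervalPartitionSum_eq _ _ hs]
  rcases hs.eq_or_lt with rfl | hlt
  · simp [wordEl]
  rw [if_neg hlt.ne, zero_add,
    extChar_wordEl_eq_sum k A φ β hβ2 hβ (by simpa using hlt)]
  refine Finset.sum_nbij' (s + ·) (· - s) ?_ ?_ ?_ ?_ fun i hi => ?_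
  iterate 4
    intro j hj
    simp only [Finset.mem_Icc, Finset.mem_Ioc, List.length_drop] at hj ⊢
    omega
  simp only [Finset.mem_Icc, List.length_drop] at hi
  rw [List.drop_drop, Nat.add_sub_cancel_left,
    extChar_wordEl_drop_eq_intervalPartitionSum φ β hβ2 hβ l (by omega)]
termination_by l.length - s
decreasing_by
  simp only [Finset.mem_Icc, List.length_drop] at hi
  omega

theorem boolean_moment_cumulant
    (φ : A →ₗ[k] k)
    (β : DT k A →ₗ[k] k)
    (hβ2 : ∀ x y : DT k A, counit k A x = 0 → counit k A y = 0 → β (x * y) = 0)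
    (hβ : (extChar k A φ).toLinearMap =
      (counit k A).toLinearMap + convSucc k A (extChar k A φ).toLinearMap β) :
    (∀ l : List A, l ≠ [] →
      extChar k A φ (wordEl k A l) =
        ∑ q ∈ Finset.Icc 1 l.length, ∑ c : Fin (q + 1) → Fin (l.length + 1),
          if StrictMono c ∧ (c 0 : ℕ) = 0 ∧ (c (Fin.last q) : ℕ) = l.length then
            ∏ j : Fin q,
              β (wordEl k A ((l.drop (c j.castSucc : ℕ)).take
                  ((c j.succ : ℕ) - (c j.castSucc : ℕ))))
          else 0)
    ∧ (∀ l : List A, l ≠ [] →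
        extChar k A φ (wordEl k A l) =
          ∑ j ∈ Finset.Icc 1 l.length,
            β (wordEl k A (l.take j)) * extChar k A φ (wordEl k A (l.drop j))) := by
  refine ⟨fun l hl => ?_, fun l hl => extChar_wordEl_eq_sum k A φ β hβ2 hβ hl⟩
  have h := extChar_wordEl_drop_eq_intervalPartitionSum k A φ β hβ2 hβ l (Nat.zero_le _)
  rw [List.drop_zero] at h
  rw [h, intervalPartitionSum_zero _ _ (by simpa using hl)]
  rfl
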